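/- arXiv:2210.06234 — 3 statements merged into one kernel-verified Lean document; each statement's English description precedes it below -/
import Mathlib

section
/- Let k be a field, and let α, β ∈ k[x,y] be linearly independent homogeneous linear forms. Then the k[x,y]-module M = {(f,g) ∈ k[x,y]² : α ∣ f−g and β ∣ f−g} is free of rank 2 with basis {(1,1), (αβ, 0)}. (This computes the equivariant cohomology of the standard T²-GKM action on S⁴.) -/
open MvPolynomial

/-!
Over any commutative ring, `(1,1)` and `(c,0)` span exactly the pairs with `c ∣ f - g`, and they
are independent when `c` is nonzero and `R` has no zero divisors. A nonzero linear form in `k[x,y]` is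
irreducible, and two linearly independent ones are not associated, hence relatively prime; so
`α ∣ f - g ∧ β ∣ f - g` is equivalent to `αβ ∣ f - g`, and one applies the first fact with `c = αβ`.
-/

section PairModule

variable {R : Type*} [CommRing R]

theorem coe_span_one_one_mk_zero (c : R) :
    ((Submodule.span R {((1 : R), (1 : R)), (c, 0)} : Submodule R (R × R)) : Set (R × R)) =
      {p | c ∣ p.1 - p.2} := by
  ext p
  simp only [SetLike.mem_coe, Submodule.mem_span_pair, Set.mem_ofPred_eq]
  constructor
  · rintro ⟨s, t, rfl⟩
    exact ⟨t, by simp [mul_comm]⟩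
  · rintro ⟨t, ht⟩
    exact ⟨p.2, t, Prod.ext (by simp; linear_combination -ht) (by simp)⟩

theorem linearIndependent_one_one_mk_zero [NoZeroDivisors R] {c : R} (hc : c ≠ 0) :
    LinearIndependent R ![((1 : R), (1 : R)), (c, 0)] := by
  refine LinearIndependent.pair_iff.mpr fun s t hst => ?_
  simp only [Prod.smul_mk, smul_eq_mul, mul_one, mul_zero, Prod.mk_add_mk, add_zero,
    Prod.mk_eq_zero] at hst
  obtain ⟨h1, rfl⟩ := hst
  exact ⟨rfl, (mul_eq_zero.mp (by simpa using h1)).resolve_right hc⟩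

end PairModule

namespace MvPolynomial

variable {σ K : Type*} [Field K]

theorem IsHomogeneous.irreducible_of_degree_one {p : MvPolynomial σ K} (hp : p.IsHomogeneous 1)
    (hp0 : p ≠ 0) : Irreducible p := by
  refine irreducible_of_totalDegree_eq_one (hp.totalDegree hp0) fun x hx => ?_
  obtain ⟨d, hd⟩ := ne_zero_iff.mp hp0
  exact isUnit_iff_ne_zero.mpr fun h => hd (zero_dvd_iff.mp (h ▸ hx d))

theorem not_dvd_of_linearIndependent {α β : MvPolynomial σ K} (hα : Irreducible α)
    (hβ : Irreducible β) (hind : LinearIndependent K ![α, β]) : ¬ α ∣ β := by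
  intro hdvd
  obtain ⟨u, hu⟩ := (hα.associated_of_dvd hβ hdvd).symm
  obtain ⟨t, -, ht⟩ := isUnit_iff_eq_C_of_isReduced.mp u.isUnit
  exact (linearIndependent_fin2.mp hind).2 t (by simp [smul_eq_C_mul, ← hu, ht, mul_comm])

end MvPolynomial

/-- The equivariant cohomology of the standard `T²`-GKM action on `S⁴` in its
GKM description: for linearly independent homogeneous linear forms `α, β` in
`k[x,y]`, the module `M = {(f,g) : α ∣ f-g ∧ β ∣ f-g}` is free of rank 2
with basis `{(1,1), (αβ, 0)}`. -/
theorem stmt2 {k : Type*} [Field k] (α β : MvPolynomial (Fin 2) k)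
    (hα : α.IsHomogeneous 1) (hβ : β.IsHomogeneous 1)
    (hind : LinearIndependent k ![α, β]) :
    LinearIndependent (MvPolynomial (Fin 2) k)
      ![((1 : MvPolynomial (Fin 2) k), (1 : MvPolynomial (Fin 2) k)),
        (α * β, (0 : MvPolynomial (Fin 2) k))] ∧
    ((Submodule.span (MvPolynomial (Fin 2) k)
        {((1 : MvPolynomial (Fin 2) k), (1 : MvPolynomial (Fin 2) k)),
         (α * β, (0 : MvPolynomial (Fin 2) k))} :
        Submodule (MvPolynomial (Fin 2) k)
          (MvPolynomial (Fin 2) k × MvPolynomial (Fin 2) k)) :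
      Set (MvPolynomial (Fin 2) k × MvPolynomial (Fin 2) k)) =
      {p : MvPolynomial (Fin 2) k × MvPolynomial (Fin 2) k |
        α ∣ p.1 - p.2 ∧ β ∣ p.1 - p.2} := by
  have hirrα := hα.irreducible_of_degree_one (hind.ne_zero 0)
  have hirrβ := hβ.irreducible_of_degree_one (hind.ne_zero 1)
  have hrel : IsRelPrime α β :=
    hirrα.isRelPrime_iff_not_dvd.mpr (not_dvd_of_linearIndependent hirrα hirrβ hind)
  refine ⟨linearIndependent_one_one_mk_zero (mul_ne_zero hirrα.ne_zero hirrβ.ne_zero), ?_⟩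
  rw [coe_span_one_one_mk_zero]
  ext p
  exact ⟨fun h => ⟨dvd_of_mul_right_dvd h, dvd_of_mul_left_dvd h⟩,
    fun h => hrel.mul_dvd h.1 h.2⟩
end

section
/- Let R = ℤ[x₁,…,x_k], Γ a finite graph with vertex set V, oriented edge set Ẽ (each unoriented edge appearing with both orientations), and a signed labeling α : Ẽ → R by linear forms with α(ē) = −α(e). Suppose there is a connection: for each oriented edge e from v to w a bijection ∇_e from the edges at v to the edges at w with ∇_e(e) = ē and α(∇_e(f)) ≡ α(f) mod α(e) for all edges f at v. Assume each α(e) is a nonzero prime element of R. Then the tuple (∏_{f ∈ Ẽ_v} (1 + α(f)))_{v ∈ V} lies in the graph cohomology, i.e. for every oriented edge e from v to w, α(e) divides ∏_{f ∈ Ẽ_v}(1+α(f)) − ∏_{g ∈ Ẽ_w}(1+α(g)). -/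
theorem Finset.dvd_prod_sub_prod {ι R : Type*} [CommRing R] {c : R} (s : Finset ι)
    {f g : ι → R} (h : ∀ i ∈ s, c ∣ f i - g i) : c ∣ ∏ i ∈ s, f i - ∏ i ∈ s, g i := by
  simp only [← Ideal.mem_span_singleton, ← Ideal.Quotient.eq, map_prod] at h ⊢
  exact Finset.prod_congr rfl h

theorem Finset.prod_filter_comp_of_bijOn {ι κ M : Type*} [Fintype ι] [Fintype κ] [CommMonoid M]
    {p : ι → Prop} {q : κ → Prop} [DecidablePred p] [DecidablePred q] {i : ι → κ}
    (hi : Set.BijOn i {x | p x} {y | q y}) (f : κ → M) :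
    ∏ x ∈ univ.filter p, f (i x) = ∏ y ∈ univ.filter q, f y := by
  rw [← coe_filter_univ, ← coe_filter_univ] at hi
  exact prod_nbij i (fun _ hx => hi.mapsTo hx) hi.injOn hi.surjOn fun _ _ => rfl

theorem stmt7_general {V E : Type} [Fintype E] [DecidableEq V] {k : ℕ}
    (ini : E → V) (rev : E → E)
    (α : E → MvPolynomial (Fin k) ℤ)
    (nabla : E → E → E)
    (hbij : ∀ e, Set.BijOn (nabla e) {f | ini f = ini e} {g | ini g = ini (rev e)})
    (hcong : ∀ e f, ini f = ini e → α e ∣ α (nabla e f) - α f) :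
    ∀ e : E,
      α e ∣ (∏ f ∈ Finset.univ.filter fun f => ini f = ini e, (1 + α f))
          - ∏ g ∈ Finset.univ.filter fun g => ini g = ini (rev e), (1 + α g) := by
  intro e
  rw [← Finset.prod_filter_comp_of_bijOn (hbij e)]
  refine Finset.dvd_prod_sub_prod _ fun f hf => ?_
  rw [add_sub_add_left_eq_sub, ← neg_sub]
  exact (hcong e f (Finset.mem_filter.1 hf).2).neg_right

/-- The combinatorial total equivariant Chern class: on a signed GKM graph
(oriented edges with `α(ē) = -α(e)` and a compatible connection, all labels
nonzero primes which are linear forms in `ℤ[x₁,…,x_k]`), the tuple assigning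
to each vertex `v` the product `∏_{f ∈ Ẽ_v} (1 + α(f))` over the oriented
edges emanating from `v` satisfies the GKM congruence relations. -/
theorem stmt7 {V E : Type} [Fintype E] [DecidableEq V] {k : ℕ}
    (ini : E → V) (rev : E → E)
    (hrevinv : ∀ e, rev (rev e) = e) (hrevne : ∀ e, rev e ≠ e)
    (α : E → MvPolynomial (Fin k) ℤ)
    (hsign : ∀ e, α (rev e) = -α e)
    (hlin : ∀ e, (α e).IsHomogeneous 1)
    (hprime : ∀ e, Prime (α e))
    (nabla : E → E → E)
    (hfix : ∀ e, nabla e e = rev e)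
    (hbij : ∀ e, Set.BijOn (nabla e) {f | ini f = ini e} {g | ini g = ini (rev e)})
    (hcong : ∀ e f, ini f = ini e → α e ∣ α (nabla e f) - α f) :
    ∀ e : E,
      α e ∣ (∏ f ∈ Finset.univ.filter fun f => ini f = ini e, (1 + α f))
          - ∏ g ∈ Finset.univ.filter fun g => ini g = ini (rev e), (1 + α g) :=
  stmt7_general ini rev α nabla hbij hcong
end

section
/- Let α, β ∈ ℤ² be linearly independent over ℚ. Then there is no integer c with 2β = cα. Consequently, the 2-valent labeled graph with two vertices joined by two edges with weights α and β admits no signed structure: there is no choice of signs ε_e for the edge labels and compatible connection satisfying the signed congruence relations, since the unique connection along the α-edge must send the β-edge to itself reversed, forcing −β ≡ β mod α in ℤ², i.e. α ∣ 2β. -/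
/-!
Linear independence over `ℚ` of the casts of integer vectors implies linear independence over
`ℤ`, so an integer relation `2εβ = cα` with a unit `ε` forces `2ε = 0`.
-/

theorem LinearIndependent.of_intCast {ι n : Type*} {v : ι → n → ℤ}
    (h : LinearIndependent ℚ fun i j => (v i j : ℚ)) : LinearIndependent ℤ v :=
  .of_comp ((Int.castAddHom ℚ).toIntLinearMap.compLeft n) (h.restrict_scalars' ℤ)

theorem LinearIndependent.eq_zero_of_smul_eq_smul {M : Type*} [AddCommGroup M] {v w : M}
    (h : LinearIndependent ℤ ![v, w]) {a c : ℤ} (hac : a • w = c • v) : a = 0 :=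
  neg_eq_zero.mp (LinearIndependent.pair_iff.mp h c (-a) (by rw [neg_smul, ← hac, add_neg_cancel])).2

/-- If `α, β ∈ ℤ²` are linearly independent over `ℚ` then there is no integer
`c` with `2β = cα`, and this remains so for any choice of signs of `α` and
`β`. Consequently the 2-valent labeled graph with two vertices joined by two
edges labeled `α` and `β` (the GKM graph of a `T²`-action on `S⁴`) admits no
signed structure, since the unique connection along the `α`-edge sends the
`β`-edge to itself reversed, forcing `-β ≡ β mod α`, i.e. `α ∣ 2β`. -/
theorem stmt8 (α β : Fin 2 → ℤ)
    (hind : LinearIndependent ℚ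
      ![(fun i => (α i : ℚ) : Fin 2 → ℚ), (fun i => (β i : ℚ) : Fin 2 → ℚ)]) :
    (¬ ∃ c : ℤ, (2 : ℤ) • β = c • α) ∧
    ∀ εa εb : ℤˣ, ¬ ∃ c : ℤ, (2 : ℤ) • ((εb : ℤ) • β) = c • ((εa : ℤ) • α) := by
  have hℤ : LinearIndependent ℤ ![α, β] :=
    .of_intCast (by convert hind using 1; ext k; fin_cases k <;> rfl)
  have signed : ∀ εa εb : ℤˣ, ¬ ∃ c : ℤ, (2 : ℤ) • ((εb : ℤ) • β) = c • ((εa : ℤ) • α) := by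
    rintro εa εb ⟨c, hc⟩
    rw [smul_smul, smul_smul] at hc
    exact mul_ne_zero two_ne_zero εb.ne_zero (hℤ.eq_zero_of_smul_eq_smul hc)
  exact ⟨fun ⟨c, hc⟩ => signed 1 1 ⟨c, by simpa using hc⟩, signed⟩
end
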